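/- For every γ > 0 and all real δx, δy, δz, the function t ↦ (1/2)√(e^{-γt}(δx² + δy²) + e^{-2γt} δz²) is antitone (nonincreasing) on [0,∞). Consequently, under the generalized amplitude damping dynamics the trace distance between any two evolved states never increases, for all γ > 0 and all f: the dynamics is BLP Markovian. -/

import Mathlib

noncomputable section

/-- The action of a qubit dynamical map, given by a real 3×3 matrix,
on Bloch vectors in ℝ³. -/
def act (T : Matrix (Fin 3) (Fin 3) ℝ) (r : EuclideanSpace ℝ (Fin 3)) :
    EuclideanSpace ℝ (Fin 3) :=
  WithLp.toLp 2 (T.mulVec r)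

/-- The matrix part T(t) = diag(√η, √η, η), η = e^{-γt}, of the generalized
amplitude damping dynamics. -/
def Tgad (γ t : ℝ) : Matrix (Fin 3) (Fin 3) ℝ :=
  Matrix.diagonal ![Real.sqrt (Real.exp (-γ * t)), Real.sqrt (Real.exp (-γ * t)),
    Real.exp (-γ * t)]

/-- The translation part c(t) = (0, 0, (2s-1)(1-η)), s = cos²(ft), η = e^{-γt}, of the
generalized amplitude damping dynamics. -/
def cgad (γ f t : ℝ) : EuclideanSpace ℝ (Fin 3) :=
  WithLp.toLp 2 ![0, 0, (2 * Real.cos (f * t) ^ 2 - 1) * (1 - Real.exp (-γ * t))]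

open Real

/-! Both translations cancel in the difference of the two evolved Bloch vectors, so the trace
distance at time `t` is half the Euclidean norm of `T(t) (r₁ - r₂)`, i.e. of a vector whose
coordinates are those of `r₁ - r₂` scaled by the nonincreasing factors `√η, √η, η`. -/

lemma antitone_exp_neg_mul {γ : ℝ} (hγ : 0 ≤ γ) : Antitone fun t : ℝ => exp (-γ * t) :=
  fun _ _ hab => exp_le_exp.2 (by nlinarith)

lemma antitone_sqrt_exp_decay {γ a b : ℝ} (hγ : 0 ≤ γ) (ha : 0 ≤ a) (hb : 0 ≤ b) :
    Antitone fun t : ℝ => √(exp (-γ * t) * a + exp (-2 * γ * t) * b) := by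
  have h2γ : 0 ≤ 2 * γ := by positivity
  intro s t hst
  have hx := antitone_exp_neg_mul hγ hst
  have hz := antitone_exp_neg_mul h2γ hst
  simp only [neg_mul] at hx hz ⊢
  gcongr

lemma act_sub (T : Matrix (Fin 3) (Fin 3) ℝ) (r₁ r₂ : EuclideanSpace ℝ (Fin 3)) :
    act T r₁ - act T r₂ = act T (r₁ - r₂) := by
  simp only [act, ← WithLp.toLp_sub, WithLp.ofLp_sub, Matrix.mulVec_sub]

lemma norm_act_Tgad (γ t : ℝ) (r : EuclideanSpace ℝ (Fin 3)) :
    ‖act (Tgad γ t) r‖ = √(exp (-γ * t) * (r 0 ^ 2 + r 1 ^ 2) + exp (-2 * γ * t) * r 2 ^ 2) := by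
  have hsq : √(exp (-γ * t)) ^ 2 = exp (-γ * t) := sq_sqrt (exp_pos _).le
  have hexp : exp (-2 * γ * t) = exp (-γ * t) ^ 2 := by rw [← exp_nat_mul]; ring_nf
  rw [EuclideanSpace.norm_eq]
  congr 1
  simp only [act, Tgad, Fin.sum_univ_three, Matrix.mulVec_diagonal, norm_eq_abs, sq_abs,
    Matrix.cons_val_zero, Matrix.cons_val_one, Matrix.cons_val_two, Matrix.head_cons,
    Matrix.tail_cons]
  rw [hexp, mul_pow, mul_pow, mul_pow, hsq]
  ring

/-- For every γ > 0 and all real δx, δy, δz, the function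
t ↦ (1/2)√(e^{-γt}(δx² + δy²) + e^{-2γt}δz²) is antitone on [0,∞); consequently, under
the generalized amplitude damping dynamics the trace distance between any two evolved
states never increases, for all γ > 0 and all f: the dynamics is BLP Markovian. -/
theorem gad_is_blp_markovian (γ : ℝ) (hγ : 0 < γ) :
    (∀ δx δy δz : ℝ,
      AntitoneOn (fun t : ℝ => (1 / 2 : ℝ) *
        Real.sqrt (Real.exp (-γ * t) * (δx ^ 2 + δy ^ 2)
          + Real.exp (-2 * γ * t) * δz ^ 2)) (Set.Ici 0))
    ∧ ∀ (f : ℝ) (r₁ r₂ : EuclideanSpace ℝ (Fin 3)), ‖r₁‖ ≤ 1 → ‖r₂‖ ≤ 1 →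
      AntitoneOn (fun t : ℝ => (1 / 2 : ℝ) *
        ‖(act (Tgad γ t) r₁ + cgad γ f t) - (act (Tgad γ t) r₂ + cgad γ f t)‖)
        (Set.Ici 0) := by
  have decay : ∀ δx δy δz : ℝ,
      AntitoneOn (fun t : ℝ => (1 / 2 : ℝ) *
        √(exp (-γ * t) * (δx ^ 2 + δy ^ 2) + exp (-2 * γ * t) * δz ^ 2)) (Set.Ici 0) :=
    fun _ _ _ => ((antitone_sqrt_exp_decay hγ.le (by positivity) (by positivity)).const_mul
      (by norm_num)).antitoneOn _
  refine ⟨decay, fun f r₁ r₂ _ _ => ?_⟩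
  simp only [add_sub_add_right_eq_sub, act_sub, norm_act_Tgad]
  exact decay _ _ _
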